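/- Let z denote the minimum over integers r ≥ 2 of the chromatic number of the generalized Kneser graph K(2r, r, 2). For any instance with two groups of agents containing at most z − 1 agents in total, where all agents have monotonic, normalized valuations over an arbitrary finite set G of goods, there exists an allocation (B₁, B₂) of G to the two groups with ||B₁| − |B₂|| ≤ 1 that is EF1 for every agent. -/

import Mathlib

open Finset

variable {γ : Type*} [DecidableEq γ]

/-- An allocation is EF1 for an agent with valuation `u` whose group receives `mine`,
the other group receiving `other`. -/
def EF1 (u : Finset γ → ℝ) (mine other : Finset γ) : Prop :=
  ∃ B ⊆ other, B.card ≤ 1 ∧ u (other \ B) ≤ u mine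

/-- A valuation is monotonic if larger sets are weakly more valuable. -/
def Monotonic (u : Finset γ → ℝ) : Prop :=
  ∀ ⦃S T : Finset γ⦄, S ⊆ T → u S ≤ u T

/-- A valuation is normalized if the empty set has value zero. -/
def Normalized (u : Finset γ → ℝ) : Prop :=
  u ∅ = 0

/-- The generalized Kneser graph `K(b, r, s)`: vertices are the `r`-element subsets of a
`b`-element set, and two distinct vertices are adjacent iff the corresponding subsets
intersect in at most `s - 1` elements. -/
def kneserGraph (b r s : ℕ) : SimpleGraph {A : Finset (Fin b) // A.card = r} where
  Adj A B := A ≠ B ∧ ((A : Finset (Fin b)) ∩ (B : Finset (Fin b))).card ≤ s - 1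
  symm := by
    constructor
    rintro A B ⟨h1, h2⟩
    exact ⟨h1.symm, by rwa [Finset.inter_comm]⟩
  loopless := by
    constructor
    rintro A ⟨h1, -⟩
    exact h1 rfl

/- With at most two goods any balanced split is EF1. Otherwise embed the goods into
`Fin (2r)` with `2r - 1 ≤ |G| ≤ 2r`; every `r`-set `A` induces a balanced split `(A, Aᶜ)`.
If none of these splits were EF1 for everybody, colour each `A` by an agent who envies.
For a monotonic valuation, two `r`-sets meeting in at most one good cannot both be envied
by the same agent (removing that good gives a cycle of strict inequalities), so this
would be a proper colouring of `K(2r, r, 2)` with fewer than `z` colours. -/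

def IsBalancedEF1 {n₁ n₂ : ℕ} [Fintype γ] (u : Fin n₁ → Finset γ → ℝ)
    (v : Fin n₂ → Finset γ → ℝ) (B : Finset γ) : Prop :=
  |(B.card : ℤ) - Bᶜ.card| ≤ 1 ∧ (∀ j, EF1 (u j) B Bᶜ) ∧ ∀ j, EF1 (v j) Bᶜ B

lemma Monotonic.EF1_of_card_le_one {u : Finset γ → ℝ} (hu : Monotonic u) {mine other : Finset γ}
    (h : other.card ≤ 1) : EF1 u mine other :=
  ⟨other, subset_rfl, h, by rw [sdiff_self]; exact hu (empty_subset _)⟩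

section Preimage

variable {α : Type*} {f : γ → α}

omit [DecidableEq γ] in
lemma Finset.card_preimage_le (hf : Function.Injective f) (A : Finset α) :
    (A.preimage f hf.injOn).card ≤ A.card :=
  card_le_card_of_injOn f (fun _ hx => mem_preimage.1 hx) hf.injOn

omit [DecidableEq γ] in
lemma Monotonic.comp_preimage (hf : Function.Injective f) {u : Finset γ → ℝ} (hu : Monotonic u) :
    Monotonic fun S : Finset α => u (S.preimage f hf.injOn) :=
  fun _ _ hST => hu (monotone_preimage hf hST)

lemma EF1.of_comp_preimage [DecidableEq α] (hf : Function.Injective f) {u : Finset γ → ℝ}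
    {S T : Finset α} (h : EF1 (fun S : Finset α => u (S.preimage f hf.injOn)) S T) :
    EF1 u (S.preimage f hf.injOn) (T.preimage f hf.injOn) := by
  obtain ⟨B, hBT, hB, hle⟩ := h
  refine ⟨B.preimage f hf.injOn, monotone_preimage hf hBT, (card_preimage_le hf B).trans hB, ?_⟩
  convert hle using 2
  ext x
  simp only [mem_sdiff, mem_preimage]

end Preimage

section Complement

variable [Fintype γ]

lemma abs_card_sub_card_compl_le_one {B : Finset γ} {r : ℕ} (hB : B.card ≤ r)
    (hBc : Bᶜ.card ≤ r) (hr : 2 * r ≤ Fintype.card γ + 1) :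
    |(B.card : ℤ) - Bᶜ.card| ≤ 1 := by
  have := card_add_card_compl B
  rw [abs_le]
  constructor <;> omega

lemma card_compl_inter_compl {S T : Finset γ} (h : S.card + T.card = Fintype.card γ) :
    (Sᶜ ∩ Tᶜ).card = (S ∩ T).card := by
  rw [← compl_union, card_compl]
  have := card_union_add_card_inter S T
  omega

/- Remove the good of `Sᶜ ∩ Tᶜ` (if any) from both sides: what is left of `Sᶜ` lies in `T`
and what is left of `Tᶜ` lies in `S`. -/
lemma Monotonic.EF1_or_EF1_of_card_compl_inter_le_one {u : Finset γ → ℝ} (hu : Monotonic u)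
    {S T : Finset γ} (h : (Sᶜ ∩ Tᶜ).card ≤ 1) : EF1 u S Sᶜ ∨ EF1 u T Tᶜ := by
  by_contra! ⟨hS, hT⟩
  have hS' : u S < u (Sᶜ \ (Sᶜ ∩ Tᶜ)) :=
    lt_of_not_ge fun hle => hS ⟨_, inter_subset_left, h, hle⟩
  have hT' : u T < u (Tᶜ \ (Sᶜ ∩ Tᶜ)) :=
    lt_of_not_ge fun hle => hT ⟨_, inter_subset_right, h, hle⟩
  have hST : u (Sᶜ \ (Sᶜ ∩ Tᶜ)) ≤ u T := hu fun x hx => by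
    simp only [mem_sdiff, mem_inter, mem_compl] at hx; tauto
  have hTS : u (Tᶜ \ (Sᶜ ∩ Tᶜ)) ≤ u S := hu fun x hx => by
    simp only [mem_sdiff, mem_inter, mem_compl] at hx; tauto
  linarith

end Complement

lemma SimpleGraph.colorable_of_forall_exists_mem_isIndepSet {V ι : Type*} [Fintype ι]
    {G : SimpleGraph V} {s : ι → Set V} (hs : ∀ i, G.IsIndepSet (s i))
    (hcover : ∀ v, ∃ i, v ∈ s i) : G.Colorable (Fintype.card ι) := by
  choose c hc using hcover
  exact (Coloring.mk c fun {v w} hadj heq => hs (c w) (heq ▸ hc v) (hc w) hadj.ne hadj).colorable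

section Kneser

lemma nonempty_kneserGraph_vertex {b r : ℕ} (h : r ≤ b) :
    Nonempty {A : Finset (Fin b) // A.card = r} :=
  let ⟨A, _, hA⟩ := exists_subset_card_eq (s := (univ : Finset (Fin b))) (by simpa using h)
  ⟨⟨A, hA⟩⟩

variable {r : ℕ} {u : Finset (Fin (2 * r)) → ℝ}

lemma Monotonic.isIndepSet_kneserGraph_not_EF1 (hu : Monotonic u) :
    (kneserGraph (2 * r) r 2).IsIndepSet {A | ¬EF1 u A.1 A.1ᶜ} := by
  intro A hA B hB _ hAB
  have hcard : (A.1ᶜ ∩ B.1ᶜ).card ≤ 1 := by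
    rw [card_compl_inter_compl (by rw [A.2, B.2, Fintype.card_fin, two_mul])]
    exact hAB.2
  exact (hu.EF1_or_EF1_of_card_compl_inter_le_one hcard).elim hA hB

lemma Monotonic.isIndepSet_kneserGraph_not_EF1_compl (hu : Monotonic u) :
    (kneserGraph (2 * r) r 2).IsIndepSet {A | ¬EF1 u A.1ᶜ A.1} := by
  intro A hA B hB _ hAB
  have hcard : (A.1ᶜᶜ ∩ B.1ᶜᶜ).card ≤ 1 := by
    simpa only [compl_compl] using hAB.2
  have := hu.EF1_or_EF1_of_card_compl_inter_le_one hcard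
  rw [compl_compl, compl_compl] at this
  exact this.elim hA hB

end Kneser

section Allocation

variable [Fintype γ] {n₁ n₂ : ℕ} {u : Fin n₁ → Finset γ → ℝ} {v : Fin n₂ → Finset γ → ℝ}

theorem exists_isBalancedEF1_of_card_le_two (hγ : Fintype.card γ ≤ 2)
    (hu : ∀ j, Monotonic (u j)) (hv : ∀ j, Monotonic (v j)) : ∃ B, IsBalancedEF1 u v B := by
  obtain ⟨B, -, hB⟩ := exists_subset_card_eq (s := (univ : Finset γ)) (n := Fintype.card γ / 2)
    (by rw [card_univ]; omega)
  have hBc : Bᶜ.card = Fintype.card γ - Fintype.card γ / 2 := by rw [card_compl, hB]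
  refine ⟨B, abs_card_sub_card_compl_le_one (r := (Fintype.card γ + 1) / 2) ?_ ?_ ?_,
    fun j => (hu j).EF1_of_card_le_one ?_, fun j => (hv j).EF1_of_card_le_one ?_⟩ <;> omega

theorem exists_isBalancedEF1_of_not_colorable {r : ℕ} (hγ : Fintype.card γ ≤ 2 * r)
    (hr : 2 * r ≤ Fintype.card γ + 1) (hcol : ¬(kneserGraph (2 * r) r 2).Colorable (n₁ + n₂))
    (hu : ∀ j, Monotonic (u j)) (hv : ∀ j, Monotonic (v j)) : ∃ B, IsBalancedEF1 u v B := by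
  obtain ⟨f⟩ : Nonempty (γ ↪ Fin (2 * r)) := Function.Embedding.nonempty_of_card_le (by simpa)
  have hf := f.injective
  let envious : Fin n₁ ⊕ Fin n₂ → Set {A : Finset (Fin (2 * r)) // A.card = r} :=
    Sum.elim (fun j => {A | ¬EF1 (fun S => u j (S.preimage f hf.injOn)) A.1 A.1ᶜ})
      (fun j => {A | ¬EF1 (fun S => v j (S.preimage f hf.injOn)) A.1ᶜ A.1})
  by_contra! hnone
  have hcover : ∀ A, ∃ i, A ∈ envious i := by
    intro A
    by_contra! hall
    set B := A.1.preimage f hf.injOn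
    have hcompl : Bᶜ = A.1ᶜ.preimage f hf.injOn := (preimage_compl _ hf).symm
    refine hnone B ⟨?_, fun j => ?_, fun j => ?_⟩
    · refine abs_card_sub_card_compl_le_one ((card_preimage_le hf _).trans A.2.le) ?_ hr
      rw [hcompl]
      exact (card_preimage_le hf _).trans (by rw [card_compl, Fintype.card_fin, A.2]; omega)
    · rw [hcompl]
      exact EF1.of_comp_preimage hf (not_not.1 (hall (.inl j)))
    · rw [hcompl]
      exact EF1.of_comp_preimage hf (not_not.1 (hall (.inr j)))
  refine hcol ?_
  simpa using SimpleGraph.colorable_of_forall_exists_mem_isIndepSet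
    (Sum.rec (fun j => ((hu j).comp_preimage hf).isIndepSet_kneserGraph_not_EF1)
      (fun j => ((hv j).comp_preimage hf).isIndepSet_kneserGraph_not_EF1_compl)) hcover

end Allocation

theorem monotonic_EF1_of_min_chromatic_general (z : ℕ)
    (hz : (z : ℕ∞) = ⨅ (r : ℕ) (_ : 2 ≤ r), (kneserGraph (2 * r) r 2).chromaticNumber)
    (γ : Type*) [Fintype γ] [DecidableEq γ]
    (n₁ n₂ : ℕ) (hn : n₁ + n₂ ≤ z - 1)
    (u : Fin n₁ → Finset γ → ℝ) (v : Fin n₂ → Finset γ → ℝ)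
    (humono : ∀ j, Monotonic (u j))
    (hvmono : ∀ j, Monotonic (v j)) :
    ∃ B₁ B₂ : Finset γ, Disjoint B₁ B₂ ∧ B₁ ∪ B₂ = Finset.univ ∧
      |(B₁.card : ℤ) - (B₂.card : ℤ)| ≤ 1 ∧
      (∀ j, EF1 (u j) B₁ B₂) ∧ (∀ j, EF1 (v j) B₂ B₁) := by
  suffices ∃ B, IsBalancedEF1 u v B by
    obtain ⟨B, hB⟩ := this
    exact ⟨B, Bᶜ, disjoint_compl_right, union_compl B, hB⟩
  by_cases hsmall : Fintype.card γ ≤ 2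
  · exact exists_isBalancedEF1_of_card_le_two hsmall humono hvmono
  set r := (Fintype.card γ + 1) / 2
  refine exists_isBalancedEF1_of_not_colorable (r := r) (by omega) (by omega) ?_ humono hvmono
  intro hcol
  have hz_le : z ≤ n₁ + n₂ := by
    have : (z : ℕ∞) ≤ (n₁ + n₂ : ℕ) := hz ▸ (iInf₂_le r (by omega)).trans hcol.chromaticNumber_le
    exact_mod_cast this
  -- `z - 1` truncates: `z ≤ n₁ + n₂ ≤ z - 1` leaves only the case without agents.
  rw [show n₁ + n₂ = 0 by omega, SimpleGraph.colorable_zero_iff] at hcol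
  exact hcol.false (nonempty_kneserGraph_vertex (by omega)).some

/-- Let z be the minimum over r ≥ 2 of the chromatic number of K(2r, r, 2). For two groups
with at most z - 1 agents in total, monotonic normalized valuations, and any finite set of
goods, a balanced EF1 allocation always exists. -/
theorem monotonic_EF1_of_min_chromatic (z : ℕ)
    (hz : (z : ℕ∞) = ⨅ (r : ℕ) (_ : 2 ≤ r), (kneserGraph (2 * r) r 2).chromaticNumber)
    (γ : Type*) [Fintype γ] [DecidableEq γ]
    (n₁ n₂ : ℕ) (hn : n₁ + n₂ ≤ z - 1)
    (u : Fin n₁ → Finset γ → ℝ) (v : Fin n₂ → Finset γ → ℝ)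
    (humono : ∀ j, Monotonic (u j)) (hunorm : ∀ j, Normalized (u j))
    (hvmono : ∀ j, Monotonic (v j)) (hvnorm : ∀ j, Normalized (v j)) :
    ∃ B₁ B₂ : Finset γ, Disjoint B₁ B₂ ∧ B₁ ∪ B₂ = Finset.univ ∧
      |(B₁.card : ℤ) - (B₂.card : ℤ)| ≤ 1 ∧
      (∀ j, EF1 (u j) B₁ B₂) ∧ (∀ j, EF1 (v j) B₂ B₁) :=
  monotonic_EF1_of_min_chromatic_general z hz γ n₁ n₂ hn u v humono hvmono
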